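/- Mini-batch SAM linear convergence: under the assumptions of β-smoothness of each f_i, λ-smoothness and α-PL of f, and interpolation, for any batch size B ≥ 1 and ρ ≤ 1/((β/α + 1/2)β), running mini-batch SAM with constant step size η★_B = (1 − (κ_B + 1/2)βρ)/(2λκ_B(βρ+1)²) where κ_B = (1/B)((B−1)/2 + β/α) gives E[f(x_t)] ≤ (1 − (α η★_B/2)(1 − (κ_B + 1/2)βρ))^t f(x_0). -/

import Mathlib

/-!
A SAM step with batch `b` moves along `g' = g_b(x + ρ g_b(x))`, which differs from the
mini-batch gradient `g_b = g_b(x)` by at most `βρ‖g_b‖` because every `∇f_i` is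
`β`-Lipschitz. The descent lemma for the `λ`-smooth `f` then bounds `f(x - η g')` by
`f x - η⟪∇f x, g_b⟫` plus multiples of `‖∇f x‖²` and `‖g_b‖²`. Averaged over the batch, `g_b`
is unbiased and `E‖g_b‖² = (1/B)(1/n)∑‖∇f_i x‖² + (1 - 1/B)‖∇f x‖²`; nonnegativity and
smoothness give `‖∇f_i‖² ≤ 2βf_i`, and PL (with `f x★ = 0` by interpolation) gives
`f ≤ ‖∇f‖²/α`, so `E‖g_b‖² ≤ 2κ_B‖∇f x‖²`. For `η★_B` this leaves
`E f(x⁺) ≤ f x - (η★_B/2)(1 - (κ_B + 1/2)βρ)‖∇f x‖²`, and PL once more turns this into the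
contraction factor, which is then iterated over the independent batches.
-/

open scoped BigOperators

/-- Mini-batch SAM trajectory: at each step a batch `b : Fin B → Fin n` of i.i.d. uniform
indices is sampled and `x_{t+1} = x_t − η g_B(x_t + ρ g_B(x_t))` with
`g_B(y) = (1/B)∑_j ∇f_{b j}(y)`. -/
noncomputable def samBatchTraj {n B d : ℕ} (η ρ : ℝ)
    (fi : Fin n → EuclideanSpace ℝ (Fin d) → ℝ)
    (x0 : EuclideanSpace ℝ (Fin d)) :
    (t : ℕ) → (Fin t → (Fin B → Fin n)) → EuclideanSpace ℝ (Fin d)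
  | 0, _ => x0
  | t + 1, ω =>
      let x := samBatchTraj η ρ fi x0 t (fun j => ω j.castSucc)
      let b := ω (Fin.last t)
      let g : EuclideanSpace ℝ (Fin d) → EuclideanSpace ℝ (Fin d) :=
        fun y => (B : ℝ)⁻¹ • ∑ j, gradient (fi (b j)) y
      x - η • g (x + ρ • g x)

open scoped RealInnerProductSpace
open InnerProductSpace Finset

theorem sum_fun_fin_succ_cons {α M : Type*} [Fintype α] [AddCommMonoid M] {m : ℕ}
    (φ : (Fin (m + 1) → α) → M) :
    ∑ b, φ b = ∑ a, ∑ b : Fin m → α, φ (Fin.cons a b) := by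
  rw [← (Fin.consEquiv fun _ => α).sum_comp, Fintype.sum_prod_type]
  rfl

theorem sum_fun_fin_succ_snoc {α M : Type*} [Fintype α] [AddCommMonoid M] {m : ℕ}
    (φ : (Fin (m + 1) → α) → M) :
    ∑ ω, φ ω = ∑ ω : Fin m → α, ∑ a, φ (Fin.snoc ω a) := by
  rw [← (Fin.snocEquiv fun _ => α).sum_comp, Fintype.sum_prod_type, sum_comm]
  rfl

theorem avg_iterate_le_pow_mul {Ω X : Type*} [Fintype Ω] [Nonempty Ω] (step : X → Ω → X)
    (traj : (t : ℕ) → (Fin t → Ω) → X) {x₀ : X} (h₀ : ∀ ω, traj 0 ω = x₀)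
    (hsucc : ∀ t ω, traj (t + 1) ω = step (traj t (Fin.init ω)) (ω (Fin.last t)))
    {φ : X → ℝ} {c : ℝ} (hc : 0 ≤ c)
    (hstep : ∀ x, (Fintype.card Ω : ℝ)⁻¹ * ∑ a, φ (step x a) ≤ c * φ x) :
    ∀ t, ((Fintype.card Ω : ℝ) ^ t)⁻¹ * ∑ ω, φ (traj t ω) ≤ c ^ t * φ x₀
  | 0 => by simp [h₀]
  | t + 1 => by
    calc ((Fintype.card Ω : ℝ) ^ (t + 1))⁻¹ * ∑ ω, φ (traj (t + 1) ω)
        = ((Fintype.card Ω : ℝ) ^ t)⁻¹ * ∑ ω : Fin t → Ω,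
            (Fintype.card Ω : ℝ)⁻¹ * ∑ a, φ (step (traj t ω) a) := by
          simp only [sum_fun_fin_succ_snoc, hsucc, Fin.init_snoc, Fin.snoc_last, ← mul_sum,
            pow_succ, mul_inv, mul_assoc]
      _ ≤ ((Fintype.card Ω : ℝ) ^ t)⁻¹ * ∑ ω : Fin t → Ω, c * φ (traj t ω) :=
          mul_le_mul_of_nonneg_left (sum_le_sum fun ω _ => hstep _) (by positivity)
      _ ≤ c ^ (t + 1) * φ x₀ := by
          rw [← mul_sum, mul_left_comm, pow_succ', mul_assoc]
          exact mul_le_mul_of_nonneg_left (avg_iterate_le_pow_mul step traj h₀ hsucc hc hstep t) hc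

section InnerProductSpace

variable {F : Type*} [NormedAddCommGroup F] [InnerProductSpace ℝ F]

theorem sum_sum_batch {n : ℕ} (hn : n ≠ 0) (v : Fin n → F) :
    ∀ B : ℕ, ∑ b : Fin B → Fin n, ∑ j, v (b j) = ((B : ℝ) * n ^ B) • (n : ℝ)⁻¹ • ∑ i, v i
  | 0 => by simp
  | B + 1 => by
    have hn' : (n : ℝ) ≠ 0 := Nat.cast_ne_zero.mpr hn
    obtain ⟨m, hm⟩ : ∃ m : F, ∑ i, v i = (n : ℝ) • m := ⟨_, (smul_inv_smul₀ hn' _).symm⟩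
    simp only [sum_fun_fin_succ_cons, Fin.sum_univ_succ, Fin.cons_zero, Fin.cons_succ,
      sum_add_distrib, sum_const, card_univ, Fintype.card_fun, Fintype.card_fin,
      ← smul_sum, sum_sum_batch hn v B, ← Nat.cast_smul_eq_nsmul ℝ, hm,
      inv_smul_smul₀ hn']
    push_cast
    module

theorem sum_norm_sum_batch_sq {n : ℕ} (hn : n ≠ 0) (v : Fin n → F) :
    ∀ B : ℕ, ∑ b : Fin B → Fin n, ‖∑ j, v (b j)‖ ^ 2 =
      n ^ B * (B * ((n : ℝ)⁻¹ * ∑ i, ‖v i‖ ^ 2) + B * (B - 1) * ‖(n : ℝ)⁻¹ • ∑ i, v i‖ ^ 2)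
  | 0 => by simp
  | B + 1 => by
    have hn' : (n : ℝ) ≠ 0 := Nat.cast_ne_zero.mpr hn
    obtain ⟨m, hm⟩ : ∃ m : F, ∑ i, v i = (n : ℝ) • m := ⟨_, (smul_inv_smul₀ hn' _).symm⟩
    obtain ⟨q, hq⟩ : ∃ q : ℝ, ∑ i, ‖v i‖ ^ 2 = n * q := ⟨_, (mul_inv_cancel_left₀ hn' _).symm⟩
    have hcross : ∑ a, ∑ b : Fin B → Fin n, 2 * ⟪v a, ∑ j, v (b j)⟫
        = 2 * ⟪∑ i, v i, ∑ b : Fin B → Fin n, ∑ j, v (b j)⟫ := by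
      simp only [← mul_sum, ← inner_sum, ← sum_inner]
    simp only [sum_fun_fin_succ_cons, Fin.sum_univ_succ, Fin.cons_zero, Fin.cons_succ,
      norm_add_sq_real, sum_add_distrib, sum_const, card_univ, Fintype.card_fun,
      Fintype.card_fin, sum_norm_sum_batch_sq hn v B, nsmul_eq_mul]
    rw [hcross, sum_sum_batch hn v B]
    simp only [hm, hq, inv_smul_smul₀ hn', inv_mul_cancel_left₀ hn', ← mul_sum,
      real_inner_smul_left, real_inner_smul_right, real_inner_self_eq_norm_sq]
    push_cast
    ring

theorem norm_average_sub_average_le {ι : Type*} [Fintype ι] [Nonempty ι] {g : ι → F → F}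
    {L : ℝ} (hg : ∀ i x y, ‖g i x - g i y‖ ≤ L * ‖x - y‖) (x y : F) :
    ‖(Fintype.card ι : ℝ)⁻¹ • ∑ i, g i x - (Fintype.card ι : ℝ)⁻¹ • ∑ i, g i y‖
      ≤ L * ‖x - y‖ := by
  have hcard : (0 : ℝ) < Fintype.card ι := by exact_mod_cast Fintype.card_pos
  rw [← smul_sub, ← sum_sub_distrib, norm_smul, norm_inv, Real.norm_natCast,
    inv_mul_le_iff₀ hcard]
  calc ‖∑ i, (g i x - g i y)‖ ≤ ∑ _i : ι, L * ‖x - y‖ := norm_sum_le_of_le _ fun i _ => hg i x y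
    _ = _ := by rw [sum_const, card_univ, nsmul_eq_mul]

variable [CompleteSpace F] {f : F → ℝ} {L : ℝ}

theorem hasDerivAt_comp_add_smul (hf : Differentiable ℝ f) (x h : F) (t : ℝ) :
    HasDerivAt (fun s : ℝ => f (x + s • h)) ⟪gradient f (x + t • h), h⟫ t := by
  rw [inner_gradient_left]
  exact (hf _).hasFDerivAt.comp_hasDerivAt t
    (((hasDerivAt_id t).smul_const h).const_add x |>.congr_deriv (one_smul ℝ h))

theorem le_add_inner_gradient_add_sq_of_lipschitz (hf : Differentiable ℝ f)
    (hL : ∀ x y, ‖gradient f x - gradient f y‖ ≤ L * ‖x - y‖) (x h : F) :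
    f (x + h) ≤ f x + ⟪gradient f x, h⟫ + L / 2 * ‖h‖ ^ 2 := by
  set φ : ℝ → ℝ := fun t => f (x + t • h) - t * ⟪gradient f x, h⟫ - L / 2 * t ^ 2 * ‖h‖ ^ 2
  have hφ : ∀ t, HasDerivAt φ
      (⟪gradient f (x + t • h), h⟫ - ⟪gradient f x, h⟫ - L * t * ‖h‖ ^ 2) t := fun t => by
    have := ((hasDerivAt_comp_add_smul hf x h t).sub ((hasDerivAt_id' t).mul_const
      ⟪gradient f x, h⟫)).sub (((hasDerivAt_pow 2 t).const_mul (L / 2)).mul_const (‖h‖ ^ 2))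
    exact this.congr_deriv (by push_cast; ring)
  have hφ' : ∀ t ∈ interior (Set.Icc (0 : ℝ) 1), deriv φ t ≤ 0 := by
    intro t ht
    rw [interior_Icc] at ht
    have hgrad : ‖gradient f (x + t • h) - gradient f x‖ ≤ L * t * ‖h‖ := by
      simpa [norm_smul, abs_of_pos ht.1, mul_assoc] using hL (x + t • h) x
    rw [(hφ t).deriv, ← inner_sub_left, sub_nonpos]
    calc _ ≤ ‖gradient f (x + t • h) - gradient f x‖ * ‖h‖ := real_inner_le_norm _ _
      _ ≤ L * t * ‖h‖ * ‖h‖ := by gcongr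
      _ = L * t * ‖h‖ ^ 2 := by ring
  have hanti := antitoneOn_of_deriv_nonpos (convex_Icc 0 1)
    (fun t _ => (hφ t).continuousAt.continuousWithinAt)
    (fun t _ => (hφ t).differentiableAt.differentiableWithinAt) hφ'
  have := hanti (by simp) (by simp) zero_le_one
  simp only [φ, zero_smul, add_zero, one_smul, zero_mul, sub_zero, one_pow, mul_one, one_mul,
    zero_pow two_ne_zero, mul_zero] at this
  linarith

theorem norm_gradient_sq_le_of_nonneg (hf : Differentiable ℝ f) (hL₀ : 0 < L)
    (hL : ∀ x y, ‖gradient f x - gradient f y‖ ≤ L * ‖x - y‖) (hf₀ : ∀ x, 0 ≤ f x) (x : F) :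
    ‖gradient f x‖ ^ 2 ≤ 2 * L * f x := by
  have h := le_add_inner_gradient_add_sq_of_lipschitz hf hL x (-L⁻¹ • gradient f x)
  rw [inner_smul_right, real_inner_self_eq_norm_sq, norm_smul, mul_pow, Real.norm_eq_abs,
    sq_abs] at h
  have h' : ‖gradient f x‖ ^ 2 / (2 * L) ≤ f x := by
    have : -L⁻¹ * ‖gradient f x‖ ^ 2 + L / 2 * ((-L⁻¹) ^ 2 * ‖gradient f x‖ ^ 2)
        = -(‖gradient f x‖ ^ 2 / (2 * L)) := by
      field_simp; ring
    linarith [hf₀ (x + -L⁻¹ • gradient f x)]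
  rwa [div_le_iff₀ (by positivity), mul_comm] at h'

theorem apply_sub_smul_le_of_norm_sub_le (hf : Differentiable ℝ f) (hL₀ : 0 ≤ L)
    (hL : ∀ x y, ‖gradient f x - gradient f y‖ ≤ L * ‖x - y‖) {η δ : ℝ} (hη : 0 ≤ η)
    (hδ : 0 ≤ δ) {g g' : F} (hg : ‖g' - g‖ ≤ δ * ‖g‖) (x : F) :
    f (x - η • g') ≤ f x - η * ⟪gradient f x, g⟫
      + η * δ / 2 * (‖gradient f x‖ ^ 2 + ‖g‖ ^ 2) + L * η ^ 2 * (δ + 1) ^ 2 / 2 * ‖g‖ ^ 2 := by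
  set G := gradient f x
  have hinner : ⟪G, g⟫ - δ / 2 * (‖G‖ ^ 2 + ‖g‖ ^ 2) ≤ ⟪G, g'⟫ := by
    have hsplit : ⟪G, g'⟫ = ⟪G, g⟫ + ⟪G, g' - g⟫ := by rw [← inner_add_right, add_sub_cancel]
    have hcs : -(‖G‖ * ‖g' - g‖) ≤ ⟪G, g' - g⟫ := neg_le_of_abs_le (abs_real_inner_le_norm _ _)
    have hpert : ‖G‖ * ‖g' - g‖ ≤ ‖G‖ * (δ * ‖g‖) := by gcongr
    -- AM-GM: `‖G‖ ‖g‖ ≤ (‖G‖² + ‖g‖²) / 2`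
    nlinarith [mul_nonneg hδ (sq_nonneg (‖G‖ - ‖g‖))]
  have hnorm : ‖g'‖ ≤ (δ + 1) * ‖g‖ := by
    calc ‖g'‖ = ‖(g' - g) + g‖ := by rw [sub_add_cancel]
      _ ≤ ‖g' - g‖ + ‖g‖ := norm_add_le _ _
      _ ≤ (δ + 1) * ‖g‖ := by linarith
  have hdesc := le_add_inner_gradient_add_sq_of_lipschitz hf hL x (-(η • g'))
  rw [← sub_eq_add_neg, inner_neg_right, real_inner_smul_right, norm_neg, norm_smul,
    Real.norm_of_nonneg hη] at hdesc
  have hquad : L / 2 * (η * ‖g'‖) ^ 2 ≤ L / 2 * (η * ((δ + 1) * ‖g‖)) ^ 2 := by gcongr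
  nlinarith [mul_le_mul_of_nonneg_left hinner hη]

theorem le_two_mul_of_nonneg_of_PL (hf : Differentiable ℝ f) (hL₀ : 0 < L)
    (hL : ∀ x y, ‖gradient f x - gradient f y‖ ≤ L * ‖x - y‖) (hf₀ : ∀ x, 0 ≤ f x) {α : ℝ}
    (hPL : ∀ x, α * f x ≤ ‖gradient f x‖ ^ 2) {z : F} (hz : f z ≠ 0) : α ≤ 2 * L :=
  le_of_mul_le_mul_right ((hPL z).trans (norm_gradient_sq_le_of_nonneg hf hL₀ hL hf₀ z))
    ((hf₀ z).lt_of_ne' hz)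

theorem gradient_eq_smul_sum {ι : Type*} [Fintype ι] {fi : ι → F → ℝ}
    (hfi : ∀ i, Differentiable ℝ (fi i)) {c : ℝ} (hf : ∀ x, f x = c * ∑ i, fi i x) (x : F) :
    gradient f x = c • ∑ i, gradient (fi i) x := by
  apply (toDual ℝ F).injective
  simp only [toDual_gradient, map_smul, map_sum, funext hf]
  rw [fderiv_const_mul (by fun_prop), fderiv_fun_sum (fun i _ => (hfi i x))]

end InnerProductSpace

section MiniBatchSAM

variable {F : Type*} [NormedAddCommGroup F] [InnerProductSpace ℝ F] [CompleteSpace F]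
  {n B : ℕ} {fi : Fin n → F → ℝ} {f : F → ℝ} {α β : ℝ}

noncomputable def miniBatchGrad (fi : Fin n → F → ℝ) (b : Fin B → Fin n) (y : F) : F :=
  (B : ℝ)⁻¹ • ∑ j, gradient (fi (b j)) y

noncomputable def samStep (η ρ : ℝ) (fi : Fin n → F → ℝ) (x : F) (b : Fin B → Fin n) : F :=
  x - η • miniBatchGrad fi b (x + ρ • miniBatchGrad fi b x)

noncomputable def batchKappa (B : ℕ) (β α : ℝ) : ℝ := (B : ℝ)⁻¹ * (((B : ℝ) - 1) / 2 + β / α)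

theorem norm_miniBatchGrad_sub_le [NeZero B]
    (hfiβ : ∀ i x y, ‖gradient (fi i) x - gradient (fi i) y‖ ≤ β * ‖x - y‖)
    (b : Fin B → Fin n) (x y : F) :
    ‖miniBatchGrad fi b x - miniBatchGrad fi b y‖ ≤ β * ‖x - y‖ := by
  simpa [miniBatchGrad] using
    norm_average_sub_average_le (g := fun j => gradient (fi (b j))) (fun j => hfiβ (b j)) x y

theorem sum_miniBatchGrad (hn : n ≠ 0) (hB : B ≠ 0) (hfi : ∀ i, Differentiable ℝ (fi i))
    (hf : ∀ x, f x = (n : ℝ)⁻¹ * ∑ i, fi i x) (x : F) :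
    ∑ b : Fin B → Fin n, miniBatchGrad fi b x = (n : ℝ) ^ B • gradient f x := by
  simp only [miniBatchGrad, ← smul_sum]
  rw [sum_sum_batch hn (fun i => gradient (fi i) x), smul_smul, gradient_eq_smul_sum hfi hf x,
    inv_mul_cancel_left₀ (Nat.cast_ne_zero.mpr hB)]

theorem sum_norm_miniBatchGrad_sq_le (hn : n ≠ 0) (hB : B ≠ 0)
    (hfi : ∀ i, Differentiable ℝ (fi i)) (hf : ∀ x, f x = (n : ℝ)⁻¹ * ∑ i, fi i x)
    (hfi₀ : ∀ i x, 0 ≤ fi i x) (hβ : 0 < β)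
    (hfiβ : ∀ i x y, ‖gradient (fi i) x - gradient (fi i) y‖ ≤ β * ‖x - y‖)
    (hα : 0 < α) (hPL : ∀ x, α * f x ≤ ‖gradient f x‖ ^ 2) (x : F) :
    ∑ b : Fin B → Fin n, ‖miniBatchGrad fi b x‖ ^ 2
      ≤ n ^ B * (2 * batchKappa B β α * ‖gradient f x‖ ^ 2) := by
  have hvar : (n : ℝ)⁻¹ * ∑ i, ‖gradient (fi i) x‖ ^ 2 ≤ 2 * β / α * ‖gradient f x‖ ^ 2 :=
    calc (n : ℝ)⁻¹ * ∑ i, ‖gradient (fi i) x‖ ^ 2 ≤ (n : ℝ)⁻¹ * ∑ i, 2 * β * fi i x := by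
          gcongr with i
          exact norm_gradient_sq_le_of_nonneg (hfi i) hβ (hfiβ i) (hfi₀ i) x
      _ = 2 * β / α * (α * f x) := by
          rw [hf, ← mul_sum]; field_simp
      _ ≤ 2 * β / α * ‖gradient f x‖ ^ 2 := by gcongr; exact hPL x
  simp only [miniBatchGrad, norm_smul, mul_pow, norm_inv, Real.norm_natCast, ← mul_sum]
  rw [sum_norm_sum_batch_sq hn (fun i => gradient (fi i) x), ← gradient_eq_smul_sum hfi hf x]
  calc _ = (n : ℝ) ^ B * ((B : ℝ)⁻¹ * ((n : ℝ)⁻¹ * ∑ i, ‖gradient (fi i) x‖ ^ 2)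
        + (B : ℝ)⁻¹ * (B - 1) * ‖gradient f x‖ ^ 2) := by
        field_simp
    _ ≤ (n : ℝ) ^ B * ((B : ℝ)⁻¹ * (2 * β / α * ‖gradient f x‖ ^ 2)
        + (B : ℝ)⁻¹ * (B - 1) * ‖gradient f x‖ ^ 2) := by gcongr
    _ = _ := by unfold batchKappa; ring

theorem sum_samStep_le (hn : n ≠ 0) (hB : B ≠ 0)
    (hfi : ∀ i, Differentiable ℝ (fi i)) (hf : ∀ x, f x = (n : ℝ)⁻¹ * ∑ i, fi i x)
    (hfi₀ : ∀ i x, 0 ≤ fi i x) (hβ : 0 < β)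
    (hfiβ : ∀ i x y, ‖gradient (fi i) x - gradient (fi i) y‖ ≤ β * ‖x - y‖)
    (hα : 0 < α) (hPL : ∀ x, α * f x ≤ ‖gradient f x‖ ^ 2) {lam : ℝ} (hlam₀ : 0 ≤ lam)
    (hlam : ∀ x y, ‖gradient f x - gradient f y‖ ≤ lam * ‖x - y‖) {η ρ : ℝ} (hη : 0 ≤ η)
    (hρ : 0 ≤ ρ) (x : F) :
    ∑ b : Fin B → Fin n, f (samStep η ρ fi x b) ≤ n ^ B * (f x - η * (1
      - (batchKappa B β α + 1 / 2) * β * ρ - lam * batchKappa B β α * (β * ρ + 1) ^ 2 * η)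
        * ‖gradient f x‖ ^ 2) := by
  have : NeZero B := ⟨hB⟩
  have hfd : Differentiable ℝ f := by rw [funext hf]; fun_prop
  set G := gradient f x
  set g := fun b : Fin B → Fin n => miniBatchGrad fi b x
  have hstep : ∀ b, f (samStep η ρ fi x b) ≤ f x + η * β * ρ / 2 * ‖G‖ ^ 2 - η * ⟪G, g b⟫
      + (η * β * ρ / 2 + lam * η ^ 2 * (β * ρ + 1) ^ 2 / 2) * ‖g b‖ ^ 2 := by
    intro b
    have hg : ‖miniBatchGrad fi b (x + ρ • g b) - g b‖ ≤ β * ρ * ‖g b‖ := by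
      simpa [norm_smul, abs_of_nonneg hρ, mul_assoc] using
        norm_miniBatchGrad_sub_le hfiβ b (x + ρ • g b) x
    have := apply_sub_smul_le_of_norm_sub_le hfd hlam₀ hlam hη (by positivity) hg x
    unfold samStep
    linarith
  have hmean : ∑ b, ⟪G, g b⟫ = (n : ℝ) ^ B * ‖G‖ ^ 2 := by
    rw [← inner_sum, sum_miniBatchGrad hn hB hfi hf, real_inner_smul_right,
      real_inner_self_eq_norm_sq]
  have hsq := sum_norm_miniBatchGrad_sq_le hn hB hfi hf hfi₀ hβ hfiβ hα hPL x
  calc ∑ b, f (samStep η ρ fi x b)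
      ≤ ∑ b, (f x + η * β * ρ / 2 * ‖G‖ ^ 2 - η * ⟪G, g b⟫
        + (η * β * ρ / 2 + lam * η ^ 2 * (β * ρ + 1) ^ 2 / 2) * ‖g b‖ ^ 2) :=
        sum_le_sum fun b _ => hstep b
    _ = (n : ℝ) ^ B * (f x + η * β * ρ / 2 * ‖G‖ ^ 2) - η * ∑ b, ⟪G, g b⟫
        + (η * β * ρ / 2 + lam * η ^ 2 * (β * ρ + 1) ^ 2 / 2) * ∑ b, ‖g b‖ ^ 2 := by
        simp only [sum_add_distrib, sum_sub_distrib, sum_const, card_univ, Fintype.card_fun,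
          Fintype.card_fin, nsmul_eq_mul, ← mul_sum]
        push_cast; ring
    _ ≤ _ := by
        rw [hmean]
        have hc : 0 ≤ η * β * ρ / 2 + lam * η ^ 2 * (β * ρ + 1) ^ 2 / 2 := by positivity
        nlinarith [mul_le_mul_of_nonneg_left hsq hc]

theorem batchKappa_add_half_mul_le_one {ρ : ℝ} (hB : 1 ≤ B) (hα : 0 < α) (hαβ : α ≤ 2 * β)
    (hρ₀ : 0 ≤ ρ) (hρ : ρ ≤ 1 / ((β / α + 1 / 2) * β)) :
    (batchKappa B β α + 1 / 2) * β * ρ ≤ 1 := by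
  have hB' : (1 : ℝ) ≤ B := by exact_mod_cast hB
  have hβα : 1 / 2 ≤ β / α := by rw [le_div_iff₀ hα]; linarith
  have hκ : batchKappa B β α ≤ β / α := by
    rw [batchKappa, inv_mul_le_iff₀ (by positivity)]
    nlinarith
  have hβ : 0 < β := by linarith
  calc (batchKappa B β α + 1 / 2) * β * ρ ≤ (β / α + 1 / 2) * β * ρ := by gcongr
    _ ≤ 1 := by rwa [le_div_iff₀' (by positivity)] at hρ

theorem avg_samStep_le (hn : n ≠ 0) (hB : B ≠ 0)
    (hfi : ∀ i, Differentiable ℝ (fi i)) (hf : ∀ x, f x = (n : ℝ)⁻¹ * ∑ i, fi i x)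
    (hfi₀ : ∀ i x, 0 ≤ fi i x) (hβ : 0 < β)
    (hfiβ : ∀ i x y, ‖gradient (fi i) x - gradient (fi i) y‖ ≤ β * ‖x - y‖)
    (hα : 0 < α) (hPL : ∀ x, α * f x ≤ ‖gradient f x‖ ^ 2) {lam : ℝ} (hlam₀ : 0 < lam)
    (hlam : ∀ x y, ‖gradient f x - gradient f y‖ ≤ lam * ‖x - y‖) {ρ : ℝ} (hρ : 0 ≤ ρ)
    (hK : (batchKappa B β α + 1 / 2) * β * ρ ≤ 1) (x : F) :
    ((n : ℝ) ^ B)⁻¹ * ∑ b : Fin B → Fin n, f (samStep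
      ((1 - (batchKappa B β α + 1 / 2) * β * ρ) /
        (2 * lam * batchKappa B β α * (β * ρ + 1) ^ 2)) ρ fi x b)
      ≤ (1 - α * ((1 - (batchKappa B β α + 1 / 2) * β * ρ) /
        (2 * lam * batchKappa B β α * (β * ρ + 1) ^ 2)) / 2
          * (1 - (batchKappa B β α + 1 / 2) * β * ρ)) * f x := by
  set κ := batchKappa B β α with hκ_def
  set K := (κ + 1 / 2) * β * ρ with hK_def
  set η := (1 - K) / (2 * lam * κ * (β * ρ + 1) ^ 2)
  have hκ : 0 < κ := by
    have : (1 : ℝ) ≤ B := by exact_mod_cast Nat.one_le_iff_ne_zero.mpr hB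
    unfold κ batchKappa; positivity
  have hη : 0 ≤ η := div_nonneg (by linarith) (by positivity)
  have hηK : lam * κ * (β * ρ + 1) ^ 2 * η = (1 - K) / 2 := by
    unfold η; field_simp
  have hsum := sum_samStep_le hn hB hfi hf hfi₀ hβ hfiβ hα hPL hlam₀.le hlam hη hρ x
  rw [← hκ_def, ← hK_def, hηK] at hsum
  rw [inv_mul_le_iff₀ (by positivity)]
  refine hsum.trans (mul_le_mul_of_nonneg_left ?_ (by positivity))
  nlinarith [mul_le_mul_of_nonneg_left (hPL x) (by positivity : 0 ≤ η * (1 - K) / 2)]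

end MiniBatchSAM

theorem minibatch_sam_linear_convergence_general
    {n B d : ℕ} (hn : 0 < n) (hB : 1 ≤ B)
    (β lam α ρ : ℝ)
    (hβ : 0 < β) (hlam : 0 < lam) (hα : 0 < α)
    (hρ0 : 0 ≤ ρ) (hρ : ρ ≤ 1 / ((β / α + 1 / 2) * β))
    (fi : Fin n → EuclideanSpace ℝ (Fin d) → ℝ)
    (f : EuclideanSpace ℝ (Fin d) → ℝ)
    (hfdef : ∀ x, f x = (n : ℝ)⁻¹ * ∑ i, fi i x)
    (hdiff : ∀ i, Differentiable ℝ (fi i))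
    (hnonneg : ∀ i x, 0 ≤ fi i x)
    (hβsmooth : ∀ i x y, ‖gradient (fi i) x - gradient (fi i) y‖ ≤ β * ‖x - y‖)
    (hlamsmooth : ∀ x y, ‖gradient f x - gradient f y‖ ≤ lam * ‖x - y‖)
    (xstar : EuclideanSpace ℝ (Fin d))
    (hPL : ∀ x, α * (f x - f xstar) ≤ ‖gradient f x‖ ^ 2)
    (hinterp : ∀ i, fi i xstar = 0 ∧ gradient (fi i) xstar = 0)
    (x0 : EuclideanSpace ℝ (Fin d)) :
    ∀ t : ℕ,
      (((n : ℝ) ^ B) ^ t)⁻¹ *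
          ∑ ω : Fin t → (Fin B → Fin n),
            f (samBatchTraj
                ((1 - ((B : ℝ)⁻¹ * (((B : ℝ) - 1) / 2 + β / α) + 1 / 2) * β * ρ) /
                  (2 * lam * ((B : ℝ)⁻¹ * (((B : ℝ) - 1) / 2 + β / α)) * (β * ρ + 1) ^ 2))
                ρ fi x0 t ω)
        ≤ (1 - α * ((1 - ((B : ℝ)⁻¹ * (((B : ℝ) - 1) / 2 + β / α) + 1 / 2) * β * ρ) /
                  (2 * lam * ((B : ℝ)⁻¹ * (((B : ℝ) - 1) / 2 + β / α)) * (β * ρ + 1) ^ 2)) / 2 *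
                (1 - ((B : ℝ)⁻¹ * (((B : ℝ) - 1) / 2 + β / α) + 1 / 2) * β * ρ)) ^ t
            * f x0 := by
  have : NeZero n := ⟨hn.ne'⟩
  have hfd : Differentiable ℝ f := by rw [funext hfdef]; fun_prop
  have hf₀ : ∀ x, 0 ≤ f x := fun x => by
    rw [hfdef]; exact mul_nonneg (by positivity) (sum_nonneg fun i _ => hnonneg i x)
  have hPL₀ : ∀ x, α * f x ≤ ‖gradient f x‖ ^ 2 := by
    simpa [show f xstar = 0 by simp [hfdef, fun i => (hinterp i).1]] using hPL
  by_cases hzero : ∀ x, f x = 0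
  · intro t; simp [hzero]
  push Not at hzero
  obtain ⟨z, hz⟩ := hzero
  have hfβ : ∀ x y, ‖gradient f x - gradient f y‖ ≤ β * ‖x - y‖ := fun x y => by
    simpa [gradient_eq_smul_sum hdiff hfdef] using norm_average_sub_average_le hβsmooth x y
  have hK := batchKappa_add_half_mul_le_one hB hα
    (le_two_mul_of_nonneg_of_PL hfd hβ hfβ hf₀ hPL₀ hz) hρ0 hρ
  have hstep := avg_samStep_le hn.ne' (by omega) hdiff hfdef hnonneg hβ hβsmooth hα hPL₀ hlam
    hlamsmooth hρ0 hK
  -- the one-step bound at `z` dominates a nonnegative average by `c * f z` with `f z > 0`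
  have hc := nonneg_of_mul_nonneg_left ((mul_nonneg (by positivity)
    (sum_nonneg fun b _ => hf₀ _)).trans (hstep z)) ((hf₀ z).lt_of_ne' hz)
  have key := avg_iterate_le_pow_mul _ (samBatchTraj _ ρ fi x0) (fun _ => rfl) (fun _ _ => rfl)
    hc (by simpa only [Fintype.card_fun, Fintype.card_fin, Nat.cast_pow] using hstep)
  simp only [Fintype.card_fun, Fintype.card_fin, Nat.cast_pow] at key
  exact key

/-- Linear convergence of mini-batch SAM: under β-smoothness of each `f_i`, λ-smoothness
and α-PL of `f`, and interpolation, for any batch size `B ≥ 1` and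
`ρ ≤ 1/((β/α + 1/2)β)`, with `κ_B = (1/B)((B−1)/2 + β/α)` and step size
`η★_B = (1 − (κ_B + 1/2)βρ)/(2λκ_B(βρ+1)²)`:
`E[f(x_t)] ≤ (1 − (αη★_B/2)(1 − (κ_B + 1/2)βρ))ᵗ f(x_0)`. -/
theorem minibatch_sam_linear_convergence
    {n B d : ℕ} (hn : 0 < n) (hB : 1 ≤ B)
    (β lam α ρ : ℝ)
    (hβ : 0 < β) (hlam : 0 < lam) (hα : 0 < α)
    (hρ0 : 0 ≤ ρ) (hρ : ρ ≤ 1 / ((β / α + 1 / 2) * β))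
    (fi : Fin n → EuclideanSpace ℝ (Fin d) → ℝ)
    (f : EuclideanSpace ℝ (Fin d) → ℝ)
    (hfdef : ∀ x, f x = (n : ℝ)⁻¹ * ∑ i, fi i x)
    (hdiff : ∀ i, Differentiable ℝ (fi i)) (hfdiff : Differentiable ℝ f)
    (hnonneg : ∀ i x, 0 ≤ fi i x)
    (hβsmooth : ∀ i x y, ‖gradient (fi i) x - gradient (fi i) y‖ ≤ β * ‖x - y‖)
    (hlamsmooth : ∀ x y, ‖gradient f x - gradient f y‖ ≤ lam * ‖x - y‖)
    (xstar : EuclideanSpace ℝ (Fin d))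
    (hPL : ∀ x, α * (f x - f xstar) ≤ ‖gradient f x‖ ^ 2)
    (hinterp : ∀ i, fi i xstar = 0 ∧ gradient (fi i) xstar = 0)
    (x0 : EuclideanSpace ℝ (Fin d)) :
    ∀ t : ℕ,
      (((n : ℝ) ^ B) ^ t)⁻¹ *
          ∑ ω : Fin t → (Fin B → Fin n),
            f (samBatchTraj
                ((1 - ((B : ℝ)⁻¹ * (((B : ℝ) - 1) / 2 + β / α) + 1 / 2) * β * ρ) /
                  (2 * lam * ((B : ℝ)⁻¹ * (((B : ℝ) - 1) / 2 + β / α)) * (β * ρ + 1) ^ 2))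
                ρ fi x0 t ω)
        ≤ (1 - α * ((1 - ((B : ℝ)⁻¹ * (((B : ℝ) - 1) / 2 + β / α) + 1 / 2) * β * ρ) /
                  (2 * lam * ((B : ℝ)⁻¹ * (((B : ℝ) - 1) / 2 + β / α)) * (β * ρ + 1) ^ 2)) / 2 *
                (1 - ((B : ℝ)⁻¹ * (((B : ℝ) - 1) / 2 + β / α) + 1 / 2) * β * ρ)) ^ t
            * f x0 :=
  minibatch_sam_linear_convergence_general hn hB β lam α ρ hβ hlam hα hρ0 hρ fi f hfdef hdiff
    hnonneg hβsmooth hlamsmooth xstar hPL hinterp x0
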